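/- Let G be a finite connected simple graph with at least one edge such that cp(G) = ρ(G) − ω(G) + 1 + ⌈δ(G)/(ω(G)−1)⌉. Then ω(G)−1 divides δ(G), G is regular, and G admits a K_{ω(G)}-decomposition in which any two distinct cliques intersect in exactly one vertex. -/

import Mathlib

open Finset SimpleGraph Polynomial

variable {V : Type*}

/-- A clique partition of `G`: a set of cliques of `G` such that every edge of `G`
lies in exactly one of them. -/
def IsCliquePartition [DecidableEq V] (G : SimpleGraph V) (P : Finset (Finset V)) : Prop :=
  (∀ s ∈ P, G.IsClique (s : Set V)) ∧
    ∀ u v : V, G.Adj u v → ∃! s, s ∈ P ∧ u ∈ s ∧ v ∈ s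

/-- The spectral radius of a finite graph: the largest eigenvalue of its adjacency matrix. -/
noncomputable def specRad [Fintype V] [DecidableEq V] (G : SimpleGraph V)
    [DecidableRel G.Adj] : ℝ :=
  sSup {μ : ℝ | Module.End.HasEigenvalue (Matrix.toLin' (G.adjMatrix ℝ)) μ}

/-- `cpT G t` : the minimum number of cliques in a clique partition of `G` in which
every clique has at most `t` vertices. -/
noncomputable def cpT [DecidableEq V] (G : SimpleGraph V) (t : ℕ) : ℕ :=
  sInf {m | ∃ P : Finset (Finset V),
    IsCliquePartition G P ∧ (∀ s ∈ P, s.card ≤ t) ∧ P.card = m}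

/-- `cp G` : the clique partition number of `G`. -/
noncomputable def cp [DecidableEq V] (G : SimpleGraph V) : ℕ :=
  sInf {m | ∃ P : Finset (Finset V), IsCliquePartition G P ∧ P.card = m}


/-
Fix a minimum clique partition `𝒫` of `G` and a positive eigenvector `x` of the adjacency matrix
`A` for `ρ = specRad G`. Let `N` be the vertex–clique incidence matrix and `d v` the number of
cliques through `v`. Then `N Nᵀ = A + diag d`, while `Nᵀ N` has entries `#(Q ∩ Q')`, whose row sums
are at most `ω + #𝒫 - 1` because distinct cliques share at most one vertex. Since
`deg v ≤ d v * (ω - 1)`, every `d v` is at least `k = ⌈δ / (ω - 1)⌉`, so with `S = Nᵀ x`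
  `(ρ + k) ‖x‖² ≤ xᵀ (A + diag d) x = ‖S‖² ≤ (ω + #𝒫 - 1) ‖x‖²`,
the last step by Cauchy–Schwarz, `‖S‖⁴ = (x ⬝ N S)² ≤ ‖x‖² Sᵀ Nᵀ N S`, and the row-sum bound.
When `cp G = ρ - ω + 1 + k` both ends agree, which forces `d v = k` for all `v` (so `G` is
`k (ω - 1)`-regular) and every row sum of `Nᵀ N` to be maximal, i.e. every clique of `𝒫` has `ω`
vertices and meets every other clique in exactly one vertex.
-/

namespace Matrix

variable {n : Type*} [Fintype n] {A : Matrix n n ℝ} {r : ℝ}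

theorem dotProduct_mulVec_le_abs (hA : ∀ i j, 0 ≤ A i j) (x : n → ℝ) :
    x ⬝ᵥ A *ᵥ x ≤ |x| ⬝ᵥ A *ᵥ |x| := by
  simp only [dotProduct, mulVec, Finset.mul_sum, Pi.abs_apply]
  refine Finset.sum_le_sum fun i _ => Finset.sum_le_sum fun j _ => ?_
  calc x i * (A i j * x j) ≤ |x i * (A i j * x j)| := le_abs_self _
    _ = |x i| * (A i j * |x j|) := by rw [abs_mul, abs_mul, abs_of_nonneg (hA i j)]

variable [DecidableEq n]

theorem IsHermitian.posSemidef_algebraMap_sub (hA : A.IsHermitian)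
    (hr : ∀ μ ∈ spectrum ℝ A, μ ≤ r) : (algebraMap ℝ (Matrix n n ℝ) r - A).PosSemidef := by
  rw [posSemidef_iff_isHermitian_and_spectrum_nonneg, ← spectrum.singleton_sub_eq]
  refine ⟨(IsSelfAdjoint.algebraMap _ (.all r)).sub hA, ?_⟩
  rintro _ ⟨_, rfl, μ, hμ, rfl⟩
  simpa using hr μ hμ

theorem dotProduct_algebraMap_sub_mulVec (x : n → ℝ) :
    x ⬝ᵥ (algebraMap ℝ (Matrix n n ℝ) r - A) *ᵥ x = r * (x ⬝ᵥ x) - x ⬝ᵥ A *ᵥ x := by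
  simp only [Algebra.algebraMap_eq_smul_one, sub_mulVec, smul_mulVec, one_mulVec, dotProduct_sub,
    dotProduct_smul, smul_eq_mul]

theorem IsHermitian.dotProduct_mulVec_le (hA : A.IsHermitian) (hr : ∀ μ ∈ spectrum ℝ A, μ ≤ r)
    (x : n → ℝ) : x ⬝ᵥ A *ᵥ x ≤ r * (x ⬝ᵥ x) := by
  have := (hA.posSemidef_algebraMap_sub hr).dotProduct_mulVec_nonneg x
  rw [star_trivial, dotProduct_algebraMap_sub_mulVec] at this
  linarith

theorem IsHermitian.mulVec_eq_smul_of_le_dotProduct (hA : A.IsHermitian)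
    (hr : ∀ μ ∈ spectrum ℝ A, μ ≤ r) {x : n → ℝ} (hx : r * (x ⬝ᵥ x) ≤ x ⬝ᵥ A *ᵥ x) :
    A *ᵥ x = r • x := by
  have hM := hA.posSemidef_algebraMap_sub hr
  have h0 : star x ⬝ᵥ (algebraMap ℝ (Matrix n n ℝ) r - A) *ᵥ x = 0 := by
    rw [star_trivial, dotProduct_algebraMap_sub_mulVec]
    linarith [hA.dotProduct_mulVec_le hr x]
  have := (hM.dotProduct_mulVec_zero_iff x).1 h0
  rw [Algebra.algebraMap_eq_smul_one, sub_mulVec, smul_mulVec, one_mulVec, sub_eq_zero] at this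
  exact this.symm

theorem IsHermitian.exists_nonneg_mulVec_eq_smul (hA : A.IsHermitian) (hA₀ : ∀ i j, 0 ≤ A i j)
    (hrA : r ∈ spectrum ℝ A) (hr : ∀ μ ∈ spectrum ℝ A, μ ≤ r) :
    ∃ x : n → ℝ, 0 ≤ x ∧ x ≠ 0 ∧ A *ᵥ x = r • x := by
  rw [← spectrum_toLin', ← Module.End.hasEigenvalue_iff_mem_spectrum] at hrA
  obtain ⟨w, hw, hw0⟩ := hrA.exists_hasEigenvector
  rw [Module.End.mem_eigenspace_iff, toLin'_apply] at hw
  refine ⟨|w|, abs_nonneg w, by simpa using hw0, hA.mulVec_eq_smul_of_le_dotProduct hr ?_⟩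
  calc r * (|w| ⬝ᵥ |w|) = w ⬝ᵥ A *ᵥ w := by
        simp only [hw, dotProduct, Pi.abs_apply, abs_mul_abs_self, Pi.smul_apply, smul_eq_mul,
          Finset.mul_sum]
        exact Finset.sum_congr rfl fun i _ => by ring
    _ ≤ |w| ⬝ᵥ A *ᵥ |w| := dotProduct_mulVec_le_abs hA₀ w

end Matrix

namespace SimpleGraph

open Matrix

variable [Fintype V] {G : SimpleGraph V} [DecidableRel G.Adj]

theorem pos_of_adjMatrix_mulVec_eq_smul (hconn : G.Connected) {x : V → ℝ} {r : ℝ} (hx₀ : 0 ≤ x)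
    (hx : x ≠ 0) (hAx : G.adjMatrix ℝ *ᵥ x = r • x) (v : V) : 0 < x v := by
  have hstep : ∀ u w, G.Adj u w → x u = 0 → x w = 0 := by
    intro u w huw hu
    have hsum : ∑ y ∈ G.neighborFinset u, x y = 0 := by
      rw [← adjMatrix_mulVec_apply, hAx, Pi.smul_apply, hu, smul_zero]
    exact (Finset.sum_eq_zero_iff_of_nonneg fun y _ => hx₀ y).1 hsum w
      ((G.mem_neighborFinset u w).2 huw)
  refine (hx₀ v).lt_of_ne fun hv => hx (funext fun w => ?_)
  induction (hconn.preconnected v w).some with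
  | nil => exact hv.symm
  | cons h _ ih => exact ih (hstep _ _ h hv.symm).symm

variable [DecidableEq V]

theorem specRad_eq_sSup_spectrum : specRad G = sSup (spectrum ℝ (G.adjMatrix ℝ)) := by
  simp only [specRad, Module.End.hasEigenvalue_iff_mem_spectrum, Matrix.spectrum_toLin']
  rfl

theorem le_specRad {μ : ℝ} (hμ : μ ∈ spectrum ℝ (G.adjMatrix ℝ)) : μ ≤ specRad G := by
  rw [specRad_eq_sSup_spectrum]
  exact le_csSup (Matrix.finite_real_spectrum).bddAbove hμ

theorem specRad_mem_spectrum [Nonempty V] : specRad G ∈ spectrum ℝ (G.adjMatrix ℝ) := by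
  rw [specRad_eq_sSup_spectrum]
  exact Set.Nonempty.csSup_mem ⟨_, (G.isHermitian_adjMatrix ℝ).eigenvalues_mem_spectrum_real
    (Classical.arbitrary V)⟩ Matrix.finite_real_spectrum

theorem exists_pos_adjMatrix_mulVec_eq_specRad (hconn : G.Connected) :
    ∃ x : V → ℝ, (∀ v, 0 < x v) ∧ G.adjMatrix ℝ *ᵥ x = specRad G • x := by
  have := hconn.nonempty
  obtain ⟨x, hx₀, hx, hAx⟩ := (G.isHermitian_adjMatrix ℝ).exists_nonneg_mulVec_eq_smul
    (fun _ _ => by simp only [adjMatrix_apply]; positivity) specRad_mem_spectrum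
    fun _ => le_specRad
  exact ⟨x, pos_of_adjMatrix_mulVec_eq_smul hconn hx₀ hx hAx, hAx⟩

end SimpleGraph

namespace Finset

theorem sum_sum_mul_mul_le_of_symm {ι : Type*} (s : Finset ι) {a : ι → ι → ℝ}
    (ha : ∀ i j, 0 ≤ a i j) (hsymm : ∀ i j, a i j = a j i) (w : ι → ℝ) :
    ∑ i ∈ s, ∑ j ∈ s, a i j * (w i * w j) ≤ ∑ i ∈ s, (∑ j ∈ s, a i j) * w i ^ 2 := by
  have hswap : ∑ i ∈ s, ∑ j ∈ s, a i j * w j ^ 2 = ∑ i ∈ s, ∑ j ∈ s, a i j * w i ^ 2 := by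
    rw [sum_comm]
    exact sum_congr rfl fun i _ => sum_congr rfl fun j _ => by rw [hsymm]
  calc ∑ i ∈ s, ∑ j ∈ s, a i j * (w i * w j)
      ≤ ∑ i ∈ s, ∑ j ∈ s, (a i j * w i ^ 2 + a i j * w j ^ 2) / 2 :=
        sum_le_sum fun i _ => sum_le_sum fun j _ => by
          nlinarith [mul_nonneg (ha i j) (sq_nonneg (w i - w j))]
    _ = ∑ i ∈ s, (∑ j ∈ s, a i j) * w i ^ 2 := by
        simp only [← sum_div, sum_add_distrib, hswap, sum_mul]
        ring

section

variable [DecidableEq V] {P : Finset (Finset V)} {Q : Finset V}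

theorem sum_card_inter_eq_card_add (hQ : Q ∈ P) :
    ∑ Q' ∈ P, #(Q ∩ Q') = #Q + ∑ Q' ∈ P.erase Q, #(Q ∩ Q') := by
  rw [← add_sum_erase P _ hQ, inter_self]

theorem sum_card_inter_add_one_le {ω : ℕ}
    (hinter : ∀ Q ∈ P, ∀ Q' ∈ P, Q ≠ Q' → #(Q ∩ Q') ≤ 1) (hcard : ∀ Q ∈ P, #Q ≤ ω)
    (hQ : Q ∈ P) : ∑ Q' ∈ P, #(Q ∩ Q') + 1 ≤ ω + #P := by
  have h₁ : ∑ Q' ∈ P.erase Q, #(Q ∩ Q') ≤ #(P.erase Q) := by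
    simpa using sum_le_card_nsmul _ _ 1 fun Q' hQ' =>
      hinter Q hQ Q' (mem_of_mem_erase hQ') (ne_of_mem_erase hQ').symm
  have h₂ := card_erase_add_one hQ
  have h₃ := hcard Q hQ
  rw [sum_card_inter_eq_card_add hQ]
  omega

theorem card_eq_and_card_inter_eq_one_of_le_sum {ω : ℕ}
    (hinter : ∀ Q ∈ P, ∀ Q' ∈ P, Q ≠ Q' → #(Q ∩ Q') ≤ 1) (hcard : ∀ Q ∈ P, #Q ≤ ω)
    (hQ : Q ∈ P) (h : ω + #P ≤ ∑ Q' ∈ P, #(Q ∩ Q') + 1) :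
    #Q = ω ∧ ∀ Q' ∈ P, Q ≠ Q' → #(Q ∩ Q') = 1 := by
  have hle : ∀ Q' ∈ P.erase Q, #(Q ∩ Q') ≤ 1 := fun Q' hQ' =>
    hinter Q hQ Q' (mem_of_mem_erase hQ') (ne_of_mem_erase hQ').symm
  have h₁ : ∑ Q' ∈ P.erase Q, #(Q ∩ Q') ≤ #(P.erase Q) := by simpa using sum_le_sum hle
  have h₂ := card_erase_add_one hQ
  have h₃ := hcard Q hQ
  rw [sum_card_inter_eq_card_add hQ] at h
  have hsum : ∑ Q' ∈ P.erase Q, #(Q ∩ Q') = ∑ Q' ∈ P.erase Q, 1 := by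
    rw [← card_eq_sum_ones]
    omega
  exact ⟨by omega, fun Q' hQ' hne =>
    (sum_eq_sum_iff_of_le hle).1 hsum Q' (mem_erase.2 ⟨hne.symm, hQ'⟩)⟩

end

variable [DecidableEq V] (P : Finset (Finset V))

theorem sum_sum_filter_mem_eq_sum_card_inter_mul (Q : Finset V) (w : Finset V → ℝ) :
    ∑ v ∈ Q, ∑ Q' ∈ P with v ∈ Q', w Q' = ∑ Q' ∈ P, #(Q ∩ Q') * w Q' := by
  rw [sum_comm' (t' := P) (s' := fun Q' => Q ∩ Q') (by simp [and_comm, and_assoc])]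
  simp

variable [Fintype V]

theorem sum_sum_filter_mem_comm {M : Type*} [AddCommMonoid M] (f : V → Finset V → M) :
    ∑ v, ∑ Q ∈ P with v ∈ Q, f v Q = ∑ Q ∈ P, ∑ v ∈ Q, f v Q :=
  sum_comm' (by simp [and_comm])

theorem sum_sq_sum_filter_mem (w : Finset V → ℝ) :
    ∑ v, (∑ Q ∈ P with v ∈ Q, w Q) ^ 2 = ∑ Q ∈ P, ∑ Q' ∈ P, #(Q ∩ Q') * (w Q * w Q') := by
  calc ∑ v, (∑ Q ∈ P with v ∈ Q, w Q) ^ 2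
      = ∑ v, ∑ Q ∈ P with v ∈ Q, w Q * ∑ Q' ∈ P with v ∈ Q', w Q' := by
        simp only [sq, sum_mul]
    _ = ∑ Q ∈ P, w Q * ∑ v ∈ Q, ∑ Q' ∈ P with v ∈ Q', w Q' := by
        rw [sum_sum_filter_mem_comm]; simp only [mul_sum]
    _ = _ := by
        simp only [sum_sum_filter_mem_eq_sum_card_inter_mul, mul_sum]
        exact sum_congr rfl fun _ _ => sum_congr rfl fun _ _ => by ring

theorem sum_sq_sum_eq_sum_mul_sum_filter_mem (x : V → ℝ) :
    ∑ Q ∈ P, (∑ v ∈ Q, x v) ^ 2 = ∑ v, x v * ∑ Q ∈ P with v ∈ Q, ∑ u ∈ Q, x u := by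
  calc _ = ∑ Q ∈ P, ∑ v ∈ Q, x v * ∑ u ∈ Q, x u := sum_congr rfl fun Q _ => by rw [sq, sum_mul]
    _ = _ := by rw [← sum_sum_filter_mem_comm]; simp only [mul_sum]

theorem sq_sum_sq_sum_le (x : V → ℝ) :
    (∑ Q ∈ P, (∑ v ∈ Q, x v) ^ 2) ^ 2 ≤
      (∑ v, x v ^ 2) * ∑ Q ∈ P, (∑ Q' ∈ P, (#(Q ∩ Q') : ℝ)) * (∑ v ∈ Q, x v) ^ 2 := by
  set S : Finset V → ℝ := fun Q => ∑ v ∈ Q, x v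
  calc (∑ Q ∈ P, S Q ^ 2) ^ 2
      ≤ (∑ v, x v ^ 2) * ∑ v, (∑ Q ∈ P with v ∈ Q, S Q) ^ 2 := by
        rw [sum_sq_sum_eq_sum_mul_sum_filter_mem]; exact sum_mul_sq_le_sq_mul_sq _ _ _
    _ ≤ _ := by
        rw [sum_sq_sum_filter_mem]
        exact mul_le_mul_of_nonneg_left (sum_sum_mul_mul_le_of_symm P
          (a := fun Q Q' => (#(Q ∩ Q') : ℝ)) (fun _ _ => Nat.cast_nonneg _)
          (fun Q Q' => by rw [inter_comm]) S) (by positivity)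

variable {P} {x : V → ℝ} {c : ℝ}

theorem sum_sq_sum_le_mul_sum_sq (hc : 0 ≤ c)
    (hrow : ∀ Q ∈ P, ∑ Q' ∈ P, (#(Q ∩ Q') : ℝ) ≤ c) :
    ∑ Q ∈ P, (∑ v ∈ Q, x v) ^ 2 ≤ c * ∑ v, x v ^ 2 := by
  set L := ∑ Q ∈ P, (∑ v ∈ Q, x v) ^ 2
  have hCS := sq_sum_sq_sum_le P x
  have hrowL : ∑ Q ∈ P, (∑ Q' ∈ P, (#(Q ∩ Q') : ℝ)) * (∑ v ∈ Q, x v) ^ 2 ≤ c * L := by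
    rw [mul_sum]
    exact sum_le_sum fun Q hQ => mul_le_mul_of_nonneg_right (hrow Q hQ) (sq_nonneg _)
  have hX : 0 ≤ ∑ v, x v ^ 2 := by positivity
  rcases (show 0 ≤ L by positivity).eq_or_lt with hL | hL
  · rw [← hL]; positivity
  · nlinarith [mul_le_mul_of_nonneg_left hrowL hX]

theorem sum_card_inter_eq_of_le_sum_sq_sum (hx : ∀ v, 0 < x v) (hne : ∀ Q ∈ P, Q.Nonempty)
    (hrow : ∀ Q ∈ P, ∑ Q' ∈ P, (#(Q ∩ Q') : ℝ) ≤ c)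
    (hL : c * ∑ v, x v ^ 2 ≤ ∑ Q ∈ P, (∑ v ∈ Q, x v) ^ 2) :
    ∀ Q ∈ P, ∑ Q' ∈ P, (#(Q ∩ Q') : ℝ) = c := by
  intro Q hQ
  set L := ∑ Q ∈ P, (∑ v ∈ Q, x v) ^ 2
  set X := ∑ v, x v ^ 2
  have hX : 0 < X := by
    obtain ⟨v, -⟩ := hne Q hQ
    exact sum_pos (fun v _ => pow_pos (hx v) 2) ⟨v, mem_univ v⟩
  have hle : ∀ Q ∈ P, (∑ Q' ∈ P, (#(Q ∩ Q') : ℝ)) * (∑ v ∈ Q, x v) ^ 2 ≤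
      c * (∑ v ∈ Q, x v) ^ 2 := fun Q hQ =>
    mul_le_mul_of_nonneg_right (hrow Q hQ) (sq_nonneg _)
  have heq : ∑ Q ∈ P, (∑ Q' ∈ P, (#(Q ∩ Q') : ℝ)) * (∑ v ∈ Q, x v) ^ 2 =
      ∑ Q ∈ P, c * (∑ v ∈ Q, x v) ^ 2 := by
    refine le_antisymm (sum_le_sum hle) ?_
    rw [← mul_sum]
    have hCS := sq_sum_sq_sum_le P x
    have hL0 : 0 ≤ L := by positivity
    nlinarith [mul_le_mul_of_nonneg_left hL hL0]
  exact mul_right_cancel₀ (pow_pos (sum_pos (fun v _ => hx v) (hne Q hQ)) 2).ne'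
    ((sum_eq_sum_iff_of_le hle).1 heq Q hQ)

end Finset

theorem ceil_div_sub_one_le_of_le_mul {δ d ω : ℕ} (h : δ ≤ d * (ω - 1)) :
    ⌈(δ : ℝ) / ((ω : ℝ) - 1)⌉ ≤ d := by
  rcases le_or_gt ω 1 with hω | hω
  · obtain rfl : δ = 0 := by simpa [Nat.sub_eq_zero_of_le hω] using h
    simp
  · have hω' : (1 : ℝ) < ω := by exact_mod_cast hω
    rw [Int.ceil_le, div_le_iff₀ (sub_pos.2 hω')]
    have : (δ : ℝ) ≤ d * ((ω - 1 : ℕ) : ℝ) := by exact_mod_cast h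
    simpa [Nat.cast_sub hω.le] using this

section CliquePartition

variable [Fintype V] [DecidableEq V]

theorem exists_isCliquePartition (G : SimpleGraph V) [DecidableRel G.Adj] :
    ∃ P, IsCliquePartition G P := by
  refine ⟨{s ∈ (univ : Finset V).powersetCard 2 | G.IsClique (s : Set V)},
    fun s hs => (mem_filter.1 hs).2, fun u v huv => ⟨{u, v}, ⟨?_, by simp, by simp⟩, ?_⟩⟩
  · simpa [mem_powersetCard, card_pair huv.ne] using fun _ => huv
  · rintro s ⟨hs, hu, hv⟩
    rw [mem_filter, mem_powersetCard] at hs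
    refine (eq_of_subset_of_card_le (insert_subset hu (singleton_subset_iff.2 hv)) ?_).symm
    rw [hs.1.2, card_pair huv.ne]

theorem exists_isCliquePartition_card_eq_cp (G : SimpleGraph V) [DecidableRel G.Adj] :
    ∃ P, IsCliquePartition G P ∧ #P = cp G :=
  Nat.sInf_mem (s := {m | ∃ P, IsCliquePartition G P ∧ #P = m})
    (by obtain ⟨P, hP⟩ := exists_isCliquePartition G; exact ⟨_, P, hP, rfl⟩)

end CliquePartition

namespace IsCliquePartition

open Matrix

variable [DecidableEq V] {G : SimpleGraph V} {P : Finset (Finset V)}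

theorem card_inter_le_one (hP : IsCliquePartition G P) :
    ∀ Q ∈ P, ∀ Q' ∈ P, Q ≠ Q' → #(Q ∩ Q') ≤ 1 := by
  intro Q hQ Q' hQ' hne
  by_contra! h
  obtain ⟨u, hu, v, hv, huv⟩ := one_lt_card.1 h
  rw [mem_inter] at hu hv
  obtain ⟨_, _, huniq⟩ := hP.2 u v (hP.1 Q hQ hu.1 hv.1 huv)
  exact hne ((huniq Q ⟨hQ, hu.1, hv.1⟩).trans (huniq Q' ⟨hQ', hu.2, hv.2⟩).symm)

theorem card_le_cliqueNum [Finite V] (hP : IsCliquePartition G P) {Q : Finset V} (hQ : Q ∈ P) :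
    #Q ≤ G.cliqueNum :=
  IsClique.card_le_cliqueNum (tc := hP.1 Q hQ)

theorem pairwiseDisjoint_erase (hP : IsCliquePartition G P) (v : V) :
    (({Q ∈ P | v ∈ Q} : Finset _) : Set (Finset V)).PairwiseDisjoint (·.erase v) := by
  intro Q hQ Q' hQ' hne
  simp only [coe_filter, Set.mem_ofPred_eq] at hQ hQ'
  refine disjoint_left.2 fun u hu hu' => hne ?_
  rw [mem_erase] at hu hu'
  obtain ⟨_, _, huniq⟩ := hP.2 u v (hP.1 Q hQ.1 hu.2 hQ.2 hu.1)
  exact (huniq Q ⟨hQ.1, hu.2, hQ.2⟩).trans (huniq Q' ⟨hQ'.1, hu'.2, hQ'.2⟩).symm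

theorem erase (hP : IsCliquePartition G P) {Q : Finset V} (hQ : #Q ≤ 1) :
    IsCliquePartition G (P.erase Q) := by
  refine ⟨fun s hs => hP.1 s (mem_of_mem_erase hs), fun u v huv => ?_⟩
  obtain ⟨s, ⟨hs, hu, hv⟩, huniq⟩ := hP.2 u v huv
  have hsQ : s ≠ Q := by
    rintro rfl
    exact (one_lt_card.2 ⟨u, hu, v, hv, huv.ne⟩).not_ge hQ
  exact ⟨s, ⟨mem_erase.2 ⟨hsQ, hs⟩, hu, hv⟩,
    fun t ⟨ht, htu, htv⟩ => huniq t ⟨mem_of_mem_erase ht, htu, htv⟩⟩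

theorem two_le_card_of_card_eq_cp (hP : IsCliquePartition G P) (hcp : #P = cp G)
    {Q : Finset V} (hQ : Q ∈ P) : 2 ≤ #Q := by
  by_contra! h
  have hle : cp G ≤ #(P.erase Q) := Nat.sInf_le ⟨_, hP.erase (Nat.lt_succ_iff.1 h), rfl⟩
  have := card_erase_lt_of_mem hQ
  omega

variable [Fintype V] [DecidableRel G.Adj]

theorem neighborFinset_eq_biUnion (hP : IsCliquePartition G P) (v : V) :
    G.neighborFinset v = {Q ∈ P | v ∈ Q}.biUnion (·.erase v) := by
  ext u
  simp only [mem_neighborFinset, mem_biUnion, mem_filter, mem_erase]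
  constructor
  · intro huv
    obtain ⟨Q, ⟨hQ, hv, hu⟩, _⟩ := hP.2 v u huv
    exact ⟨Q, ⟨hQ, hv⟩, huv.ne', hu⟩
  · rintro ⟨Q, ⟨hQ, hv⟩, hne, hu⟩
    exact hP.1 Q hQ hv hu hne.symm

theorem sum_neighborFinset {M : Type*} [AddCommMonoid M] (hP : IsCliquePartition G P)
    (f : V → M) (v : V) :
    ∑ u ∈ G.neighborFinset v, f u = ∑ Q ∈ P with v ∈ Q, ∑ u ∈ Q.erase v, f u := by
  rw [hP.neighborFinset_eq_biUnion, sum_biUnion (hP.pairwiseDisjoint_erase v)]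

theorem degree_eq_sum (hP : IsCliquePartition G P) (v : V) :
    G.degree v = ∑ Q ∈ P with v ∈ Q, (#Q - 1) := by
  rw [← card_neighborFinset_eq_degree, card_eq_sum_ones, hP.sum_neighborFinset]
  refine sum_congr rfl fun Q hQ => ?_
  rw [← card_eq_sum_ones, card_erase_of_mem (mem_filter.1 hQ).2]

theorem degree_le_mul (hP : IsCliquePartition G P) {t : ℕ} (ht : ∀ Q ∈ P, #Q ≤ t) (v : V) :
    G.degree v ≤ #{Q ∈ P | v ∈ Q} * (t - 1) := by
  rw [hP.degree_eq_sum, ← smul_eq_mul]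
  exact sum_le_card_nsmul _ _ _ fun Q hQ => Nat.sub_le_sub_right (ht Q (mem_filter.1 hQ).1) 1

theorem degree_eq_mul (hP : IsCliquePartition G P) {t : ℕ} (ht : ∀ Q ∈ P, #Q = t) (v : V) :
    G.degree v = #{Q ∈ P | v ∈ Q} * (t - 1) := by
  rw [hP.degree_eq_sum, ← smul_eq_mul, ← sum_const]
  exact sum_congr rfl fun Q hQ => by rw [ht Q (mem_filter.1 hQ).1]

theorem sum_filter_mem_sum_eq (hP : IsCliquePartition G P) (x : V → ℝ) (v : V) :
    ∑ Q ∈ P with v ∈ Q, ∑ u ∈ Q, x u = #{Q ∈ P | v ∈ Q} * x v + (G.adjMatrix ℝ *ᵥ x) v := by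
  rw [adjMatrix_mulVec_apply, hP.sum_neighborFinset, ← nsmul_eq_mul, ← sum_const,
    ← sum_add_distrib]
  exact sum_congr rfl fun Q hQ => (add_sum_erase Q x (mem_filter.1 hQ).2).symm

theorem sum_sq_sum_eq (hP : IsCliquePartition G P) {x : V → ℝ} {r : ℝ}
    (hAx : G.adjMatrix ℝ *ᵥ x = r • x) :
    ∑ Q ∈ P, (∑ v ∈ Q, x v) ^ 2 = ∑ v, (r + #{Q ∈ P | v ∈ Q}) * x v ^ 2 := by
  calc ∑ Q ∈ P, (∑ v ∈ Q, x v) ^ 2 = ∑ v, x v * ∑ Q ∈ P with v ∈ Q, ∑ u ∈ Q, x u :=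
        sum_sq_sum_eq_sum_mul_sum_filter_mem P x
    _ = ∑ v, (r + #{Q ∈ P | v ∈ Q}) * x v ^ 2 := by
        simp only [hP.sum_filter_mem_sum_eq, hAx, Pi.smul_apply, smul_eq_mul]
        exact sum_congr rfl fun v _ => by ring

theorem eq_of_cliqueNum_add_card_le [Nonempty V] (hP : IsCliquePartition G P)
    (hne : ∀ Q ∈ P, Q.Nonempty) {x : V → ℝ} (hx : ∀ v, 0 < x v) {r k : ℝ}
    (hAx : G.adjMatrix ℝ *ᵥ x = r • x) (hk : ∀ v, k ≤ #{Q ∈ P | v ∈ Q})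
    (hle : G.cliqueNum + #P - 1 ≤ r + k) :
    (∀ v, #{Q ∈ P | v ∈ Q} = k) ∧
      ∀ Q ∈ P, #Q = G.cliqueNum ∧ ∀ Q' ∈ P, Q ≠ Q' → #(Q ∩ Q') = 1 := by
  set c : ℝ := G.cliqueNum + #P - 1
  have hcard : ∀ Q ∈ P, #Q ≤ G.cliqueNum := fun Q hQ => hP.card_le_cliqueNum hQ
  have hrow : ∀ Q ∈ P, ∑ Q' ∈ P, (#(Q ∩ Q') : ℝ) ≤ c := fun Q hQ => by
    have := (Nat.cast_le (α := ℝ)).2 (sum_card_inter_add_one_le hP.card_inter_le_one hcard hQ)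
    push_cast at this
    linarith
  have hc : 0 ≤ c := by
    have : (1 : ℝ) ≤ G.cliqueNum := Nat.one_le_cast.2 <| by
      simpa using IsClique.card_le_cliqueNum (G := G) (t := {Classical.arbitrary V}) (tc := by simp)
    linarith [(#P).cast_nonneg (α := ℝ)]
  have hL := hP.sum_sq_sum_eq hAx
  have hlow : c * ∑ v, x v ^ 2 ≤ ∑ v, (r + k) * x v ^ 2 := by
    rw [mul_sum]
    exact sum_le_sum fun v _ => mul_le_mul_of_nonneg_right hle (sq_nonneg _)
  have hdk : ∀ v ∈ univ, (r + k) * x v ^ 2 ≤ (r + #{Q ∈ P | v ∈ Q}) * x v ^ 2 :=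
    fun v _ => by gcongr; exact hk v
  have hup := sum_sq_sum_le_mul_sum_sq (x := x) hc hrow
  refine ⟨fun v => ?_, fun Q hQ => card_eq_and_card_inter_eq_one_of_le_sum
    hP.card_inter_le_one hcard hQ ?_⟩
  · have heq : ∑ v, (r + k) * x v ^ 2 = ∑ v, (r + #{Q ∈ P | v ∈ Q}) * x v ^ 2 :=
      le_antisymm (sum_le_sum hdk) (hL ▸ hup.trans hlow)
    have := (sum_eq_sum_iff_of_le hdk).1 heq v (mem_univ v)
    linarith [mul_right_cancel₀ (pow_pos (hx v) 2).ne' this]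
  · have := sum_card_inter_eq_of_le_sum_sq_sum hx hne hrow
      (hlow.trans ((sum_le_sum hdk).trans_eq hL.symm)) Q hQ
    rw [← Nat.cast_le (α := ℝ)]
    push_cast
    linarith

end IsCliquePartition

theorem regular_decomposition_of_cp_eq_general [Fintype V] [DecidableEq V] (G : SimpleGraph V)
    [DecidableRel G.Adj] (hconn : G.Connected)
    (heq : (cp G : ℝ) = specRad G - G.cliqueNum + 1 +
      (⌈(G.minDegree : ℝ) / ((G.cliqueNum : ℝ) - 1)⌉ : ℤ)) :
    (G.cliqueNum - 1) ∣ G.minDegree ∧ (∃ d, G.IsRegularOfDegree d) ∧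
      ∃ P : Finset (Finset V), IsCliquePartition G P ∧ (∀ s ∈ P, s.card = G.cliqueNum) ∧
        ∀ s₁ ∈ P, ∀ s₂ ∈ P, s₁ ≠ s₂ → (s₁ ∩ s₂).card = 1 := by
  obtain ⟨v₀⟩ := hconn.nonempty
  have : Nonempty V := ⟨v₀⟩
  obtain ⟨P, hP, hcp⟩ := exists_isCliquePartition_card_eq_cp G
  obtain ⟨x, hx, hAx⟩ := exists_pos_adjMatrix_mulVec_eq_specRad hconn
  have hk : ∀ v, (⌈(G.minDegree : ℝ) / ((G.cliqueNum : ℝ) - 1)⌉ : ℝ) ≤ #{Q ∈ P | v ∈ Q} :=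
    fun v => mod_cast ceil_div_sub_one_le_of_le_mul <| (G.minDegree_le_degree v).trans <|
      hP.degree_le_mul (fun Q hQ => hP.card_le_cliqueNum hQ) v
  obtain ⟨hd, hP'⟩ := hP.eq_of_cliqueNum_add_card_le
    (fun Q hQ => card_pos.1 (zero_lt_two.trans_le (hP.two_le_card_of_card_eq_cp hcp hQ)))
    hx hAx hk (by rw [hcp, heq]; linarith)
  have hreg : G.IsRegularOfDegree (#{Q ∈ P | v₀ ∈ Q} * (G.cliqueNum - 1)) := fun v => by
    rw [hP.degree_eq_mul (fun Q hQ => (hP' Q hQ).1) v, (show #{Q ∈ P | v ∈ Q} = #{Q ∈ P | v₀ ∈ Q}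
      from mod_cast (hd v).trans (hd v₀).symm)]
  exact ⟨hreg.minDegree_eq ▸ dvd_mul_left _ _, ⟨_, hreg⟩, P, hP, fun Q hQ => (hP' Q hQ).1,
    fun Q hQ Q' hQ' hne => (hP' Q hQ).2 Q' hQ' hne⟩

/-- Equality case of the spectral lower bound for `cp(G)`:
if `cp(G) = ρ(G) − ω(G) + 1 + ⌈δ(G)/(ω(G)−1)⌉`, then `ω(G)−1` divides `δ(G)`, `G`
is regular, and `G` admits a `K_{ω(G)}`-decomposition in which any two distinct
cliques intersect in exactly one vertex. -/
theorem regular_decomposition_of_cp_eq [Fintype V] [DecidableEq V] (G : SimpleGraph V)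
    [DecidableRel G.Adj] (hconn : G.Connected) (hedge : G.edgeSet.Nonempty)
    (heq : (cp G : ℝ) = specRad G - G.cliqueNum + 1 +
      (⌈(G.minDegree : ℝ) / ((G.cliqueNum : ℝ) - 1)⌉ : ℤ)) :
    (G.cliqueNum - 1) ∣ G.minDegree ∧ (∃ d, G.IsRegularOfDegree d) ∧
      ∃ P : Finset (Finset V), IsCliquePartition G P ∧ (∀ s ∈ P, s.card = G.cliqueNum) ∧
        ∀ s₁ ∈ P, ∀ s₂ ∈ P, s₁ ≠ s₂ → (s₁ ∩ s₂).card = 1 :=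
  regular_decomposition_of_cp_eq_general G hconn heq
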